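/- arXiv:1404.6509 — 2 statements merged into one kernel-verified Lean document; each statement's English description precedes it below -/
import Mathlib

section
/- If two systems of cycles s₀ and s₁ in ℤ² are flip homotopic, then P_{s₀}(q) = P_{s₁}(q). -/
noncomputable section
open Classical
attribute [local instance] Classical.propDecidable

/-- A unit cube of ℤ³, identified with the integer coordinates of its corner:
`(x,y,z)` stands for the cube `(x,y,z) + [0,1]³` with center `(x+½, y+½, z+½)`. -/
abbrev Cell : Type := ℤ × ℤ × ℤ

/-- A square of the plane grid ℤ², identified similarly. -/
abbrev Sq : Type := ℤ × ℤ

/-- A directed edge of the grid graph ℤ². -/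
abbrev DEdge : Type := Sq × Sq

/-- The cube `C(x♯,y♯,z♯)` is white if `x+y+z` is even (black otherwise). -/
def cellWhite (c : Cell) : Prop := (c.1 + c.2.1 + c.2.2) % 2 = 0

/-- Checkerboard coloring of plane squares: black iff coordinate sum is odd. -/
def sqBlack (s : Sq) : Prop := (s.1 + s.2) % 2 = 1

/-- Two cubes are adjacent (share a face) iff their centers are at distance 1. -/
def adj3 (a b : Cell) : Prop :=
  (a.1 - b.1).natAbs + (a.2.1 - b.2.1).natAbs + (a.2.2 - b.2.2).natAbs = 1

/-- Two plane squares are adjacent iff their centers are at distance 1. -/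
def adj2 (a b : Sq) : Prop := (a.1 - b.1).natAbs + (a.2 - b.2).natAbs = 1

/-- A domino brick (dimer): the union of two cubes sharing a face. -/
def IsDimer (d : Finset Cell) : Prop := ∃ a b : Cell, adj3 a b ∧ d = {a, b}

/-- A tiling of a region `R`: a set of dimers contained in `R` covering each cube exactly once. -/
def IsTiling (R : Finset Cell) (T : Finset (Finset Cell)) : Prop :=
  (∀ d ∈ T, IsDimer d ∧ d ⊆ R) ∧ ∀ c ∈ R, ∃! d, d ∈ T ∧ c ∈ d

/-- A flip: remove two disjoint parallel dimers forming a 2×2×1 slab and place them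
back in the unique other position. -/
def FlipStep (T₀ T₁ : Finset (Finset Cell)) : Prop :=
  ∃ d₁ d₂ d₃ d₄ : Finset Cell,
    d₁ ∈ T₀ ∧ d₂ ∈ T₀ ∧ d₃ ∈ T₁ ∧ d₄ ∈ T₁ ∧
    IsDimer d₁ ∧ IsDimer d₂ ∧ IsDimer d₃ ∧ IsDimer d₄ ∧
    Disjoint d₁ d₂ ∧ Disjoint d₃ d₄ ∧
    d₁ ∪ d₂ = d₃ ∪ d₄ ∧ ({d₁, d₂} : Finset (Finset Cell)) ≠ {d₃, d₄} ∧
    T₀ \ {d₁, d₂} = T₁ \ {d₃, d₄}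

/-- Two tilings are in the same flip connected component. -/
def FlipConnected : Finset (Finset Cell) → Finset (Finset Cell) → Prop :=
  Relation.ReflTransGen FlipStep

/-- The cells of the floor at height `z` over the plane region `D`. -/
def floorCells (D : Finset Sq) (z : ℤ) : Finset Cell := D.image fun s => (s.1, s.2, z)

/-- A two-story region with floors `D₀` (top, z = 0) and `D₁` (bottom, z = 1). -/
def twoStoryCells (D₀ D₁ : Finset Sq) : Finset Cell := floorCells D₀ 0 ∪ floorCells D₁ 1

/-- A duplex region: a two-story region with two identical floors. -/
def duplexCells (D : Finset Sq) : Finset Cell := twoStoryCells D D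

/-- The closed plane region (union of closed unit squares) associated to `D`;
used to express that a floor is (connected and) simply connected. -/
def planeRegion (D : Finset Sq) : Set (ℝ × ℝ) :=
  ⋃ s ∈ D, Set.Icc ((s.1 : ℝ), (s.2 : ℝ)) ((s.1 : ℝ) + 1, (s.2 : ℝ) + 1)

/-- The z-dimer (jewel) over the square `s`, joining the two floors of a two-story region. -/
def zDimerAt (s : Sq) : Finset Cell := {(s.1, s.2, 0), (s.1, s.2, 1)}

/-- A dimer parallel to the z axis. -/
def IsZDimer (d : Finset Cell) : Prop := ∃ a : Cell, d = {a, (a.1, a.2.1, a.2.2 + 1)}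

/-- The jewels of a two-story tiling: squares of the drawing occupied by z-dimers. -/
def jewelSquares (D : Finset Sq) (T : Finset (Finset Cell)) : Finset Sq :=
  D.filter fun s => zDimerAt s ∈ T

/-- Orientation convention for the associated drawing: a horizontal dimer of the
floor z = 0 is traversed from its black square to its white square, and a horizontal
dimer of the floor z = 1 from its white square to its black square. -/
def goodDir (a b : Cell) : Prop :=
  adj3 a b ∧ a.2.2 = b.2.2 ∧
    ((a.2.2 = 0 ∧ sqBlack (a.1, a.2.1)) ∨ (a.2.2 = 1 ∧ ¬ sqBlack (a.1, a.2.1)))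

/-- The directed edges of the associated drawing of a two-story tiling: each horizontal
dimer, projected to the plane and oriented by the convention above. -/
def tilingEdges (T : Finset (Finset Cell)) : Finset DEdge :=
  ((T.biUnion fun d => d ×ˢ d).filter fun p => goodDir p.1 p.2).image
    fun p => ((p.1.1, p.1.2.1), (p.2.1, p.2.2.1))

/-- Signed crossing of the oriented grid edge `a → b` with the horizontal ray going
right from the jewel position `p` (at height p.2 + ½): the building block of winding
numbers. -/
def edgeWind (p a b : Sq) : ℤ :=
  if a.1 = b.1 ∧ p.1 < a.1 ∧ a.2 = p.2 ∧ b.2 = p.2 + 1 then 1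
  else if a.1 = b.1 ∧ p.1 < a.1 ∧ a.2 = p.2 + 1 ∧ b.2 = p.2 then -1
  else 0

/-- `k_t(j)`: the sum of the winding numbers of all the cycles of the associated
drawing of `T` around the jewel `j`, computed as the total signed crossing number. -/
def windTot (T : Finset (Finset Cell)) (j : Sq) : ℤ :=
  ∑ e ∈ tilingEdges T, edgeWind j e.1 e.2

/-- The polynomial invariant `P_t(q) = Σ_{j black} q^{k_t(j)} − Σ_{j white} q^{k_t(j)}`
of a tiling of a duplex region, as a Laurent polynomial in `q = T 1`. -/
def Pt (D : Finset Sq) (T : Finset (Finset Cell)) : LaurentPolynomial ℤ :=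
  ∑ j ∈ jewelSquares D T,
    (if sqBlack j then 1 else -1) * LaurentPolynomial.T (windTot T j)

/-- The twist `Tw(t) = P_t'(1)` of a tiling of a duplex region. -/
def twistOf (D : Finset Sq) (T : Finset (Finset Cell)) : ℤ :=
  ∑ j ∈ jewelSquares D T, (if sqBlack j then windTot T j else -(windTot T j))

/-- Evaluation of a Laurent polynomial at `q = 1`. -/
def evalOne (p : LaurentPolynomial ℤ) : ℤ := p.coeff.sum fun _ a => a

/-- Evaluation of the derivative of a Laurent polynomial at `q = 1`. -/
def evalDerivOne (p : LaurentPolynomial ℤ) : ℤ := p.coeff.sum fun n a => n * a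

/-! ### Holes, sources, sinks and ghost curves (general two-story regions) -/

/-- The holes of a two-story region: squares of the symmetric difference of the floors. -/
def holes (D₀ D₁ : Finset Sq) : Finset Sq := (D₀ \ D₁) ∪ (D₁ \ D₀)

/-- Sources: white holes. -/
def sources (D₀ D₁ : Finset Sq) : Finset Sq := (holes D₀ D₁).filter fun s => ¬ sqBlack s

/-- Sinks: black holes. -/
def sinks (D₀ D₁ : Finset Sq) : Finset Sq := (holes D₀ D₁).filter sqBlack

/-- A choice of ghost curves for a two-story region: each source is joined to a sink
by a lattice path avoiding all squares common to both floors, and the assignment of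
sinks to sources is bijective. -/
structure GhostChoice (D₀ D₁ : Finset Sq) where
  curve : Sq → List Sq
  head_eq : ∀ s ∈ sources D₀ D₁, (curve s).head? = some s
  chain : ∀ s ∈ sources D₀ D₁, (curve s).Chain' adj2
  avoid : ∀ s ∈ sources D₀ D₁, ∀ v ∈ curve s, v ∉ D₀ ∩ D₁
  lastBij : Set.BijOn (fun s => ((curve s).getLast?).getD s)
      ↑(sources D₀ D₁) ↑(sinks D₀ D₁)

/-- Signed crossing number of an (open) lattice path with the ray from `j`. -/
def pathWind (j : Sq) (l : List Sq) : ℤ :=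
  ((l.zip l.tail).map fun e => edgeWind j e.1 e.2).sum

/-- Total winding contribution of the ghost curves around `j`. -/
def ghostWind {D₀ D₁ : Finset Sq} (g : GhostChoice D₀ D₁) (j : Sq) : ℤ :=
  ∑ s ∈ sources D₀ D₁, pathWind j (g.curve s)

/-- The polynomial invariant of a tiling of a general two-story region, relative to a
choice of ghost curves. -/
def PtG {D₀ D₁ : Finset Sq} (g : GhostChoice D₀ D₁) (T : Finset (Finset Cell)) :
    LaurentPolynomial ℤ :=
  ∑ j ∈ jewelSquares (D₀ ∩ D₁) T,
    (if sqBlack j then 1 else -1) * LaurentPolynomial.T (windTot T j + ghostWind g j)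

/-- The twist `Tw(t) = P_t'(1)` relative to a choice of ghost curves. -/
def twistG {D₀ D₁ : Finset Sq} (g : GhostChoice D₀ D₁) (T : Finset (Finset Cell)) : ℤ :=
  ∑ j ∈ jewelSquares (D₀ ∩ D₁) T,
    (if sqBlack j then windTot T j + ghostWind g j else -(windTot T j + ghostWind g j))

/-! ### Trits -/

/-- Translation of configurations in the plane directions. -/
def trCell (v : Sq) (c : Cell) : Cell := (c.1 + v.1, c.2.1 + v.2, c.2.2)
def trDimer (v : Sq) (d : Finset Cell) : Finset Cell := d.image (trCell v)
def trConf (v : Sq) (S : Finset (Finset Cell)) : Finset (Finset Cell) := S.image (trDimer v)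

/-- The local configurations (before, after) of a positive trit inside a 2×2×2 cube
with floors z = 0, 1: three pairwise non-parallel dimers replaced by the unique other
configuration, in the positive direction. -/
def posTritPatterns : List (Finset (Finset Cell) × Finset (Finset Cell)) :=
  [ ({({(0, 0, 0), (1, 0, 0)} : Finset Cell), ({(0, 1, 0), (0, 1, 1)} : Finset Cell),
        ({(1, 0, 1), (1, 1, 1)} : Finset Cell)},
     {({(0, 0, 0), (0, 1, 0)} : Finset Cell), ({(0, 1, 1), (1, 1, 1)} : Finset Cell),
        ({(1, 0, 0), (1, 0, 1)} : Finset Cell)}),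
    ({({(0, 0, 1), (0, 1, 1)} : Finset Cell), ({(0, 1, 0), (1, 1, 0)} : Finset Cell),
        ({(1, 0, 0), (1, 0, 1)} : Finset Cell)},
     {({(0, 0, 1), (1, 0, 1)} : Finset Cell), ({(0, 1, 0), (0, 1, 1)} : Finset Cell),
        ({(1, 0, 0), (1, 1, 0)} : Finset Cell)}),
    ({({(0, 0, 0), (0, 0, 1)} : Finset Cell), ({(0, 1, 1), (1, 1, 1)} : Finset Cell),
        ({(1, 0, 0), (1, 1, 0)} : Finset Cell)},
     {({(0, 0, 0), (1, 0, 0)} : Finset Cell), ({(0, 0, 1), (0, 1, 1)} : Finset Cell),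
        ({(1, 1, 0), (1, 1, 1)} : Finset Cell)}),
    ({({(0, 0, 0), (0, 1, 0)} : Finset Cell), ({(0, 0, 1), (1, 0, 1)} : Finset Cell),
        ({(1, 1, 0), (1, 1, 1)} : Finset Cell)},
     {({(0, 0, 0), (0, 0, 1)} : Finset Cell), ({(0, 1, 0), (1, 1, 0)} : Finset Cell),
        ({(1, 0, 1), (1, 1, 1)} : Finset Cell)})]

/-- A positive trit: some translate of one of the positive local configurations is
replaced by the corresponding other configuration. -/
def PosTritStep (T₀ T₁ : Finset (Finset Cell)) : Prop :=
  ∃ (v : Sq) (AB : Finset (Finset Cell) × Finset (Finset Cell)),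
    AB ∈ posTritPatterns ∧ trConf v AB.1 ⊆ T₀ ∧
    T₁ = (T₀ \ trConf v AB.1) ∪ trConf v AB.2

/-- A negative trit is the reverse of a positive trit. -/
def NegTritStep (T₀ T₁ : Finset (Finset Cell)) : Prop := PosTritStep T₁ T₀

/-! ### Systems of cycles (socks) in ℤ² -/

/-- The list of directed edges of a cyclic list of vertices. -/
def cyclicPairs (l : List Sq) : List DEdge := l.zip (l.rotate 1)

/-- A simple oriented lattice cycle. -/
def IsSimpleCycle (l : List Sq) : Prop :=
  l.Nodup ∧ 4 ≤ l.length ∧ ∀ e ∈ cyclicPairs l, adj2 e.1 e.2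

/-- A system of cycles (sock) in ℤ²: a finite collection of disjoint simple oriented
cycles.  Vertices of ℤ² lying on no cycle are its jewels. -/
structure Sock where
  cycles : Finset (List Sq)
  simple : ∀ l ∈ cycles, IsSimpleCycle l
  disj : ∀ l ∈ cycles, ∀ l' ∈ cycles, l ≠ l' → ∀ v ∈ l, v ∉ l'

/-- The directed edges of a sock. -/
def sockEdges (s : Sock) : Finset DEdge := s.cycles.sup fun l => (cyclicPairs l).toFinset

/-- The vertices lying on the cycles of a sock. -/
def sockVerts (s : Sock) : Finset Sq := s.cycles.sup List.toFinset

/-- `k_s(j)`: the sum of the winding numbers of the cycles of `s` around `j`. -/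
def windS (s : Sock) (j : Sq) : ℤ := ∑ e ∈ sockEdges s, edgeWind j e.1 e.2

/-- A finite region of ℤ² containing every jewel with nonzero winding number. -/
def sockBox (s : Sock) : Finset Sq :=
  (sockVerts s).biUnion fun a => (sockVerts s).biUnion fun b => Finset.Icc (a ⊓ b) (a ⊔ b)

/-- The invariant `P_s(q)` of a sock: the (finite) sum of `± q^{k_s(j)}` over the
jewels `j` with `k_s(j) ≠ 0`, signed by color. -/
def Psock (s : Sock) : LaurentPolynomial ℤ :=
  ∑ j ∈ (sockBox s).filter (fun j => j ∉ sockVerts s ∧ windS s j ≠ 0),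
    (if sqBlack j then 1 else -1) * LaurentPolynomial.T (windS s j)

/-- The empty sock. -/
def emptySock : Sock where
  cycles := ∅
  simple := fun l hl => absurd hl (Finset.notMem_empty l)
  disj := fun l hl => absurd hl (Finset.notMem_empty l)

def rev (e : DEdge) : DEdge := (e.2, e.1)

/-- The boundary of the unit lattice square with lower-left corner `p`, as an oriented
4-cycle of directed edges (`o = true`: counterclockwise). -/
def unitSq (p : Sq) (o : Bool) : Finset DEdge :=
  if o then
    {((p, (p.1 + 1, p.2)) : DEdge), (((p.1 + 1, p.2), (p.1 + 1, p.2 + 1)) : DEdge),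
     (((p.1 + 1, p.2 + 1), (p.1, p.2 + 1)) : DEdge), (((p.1, p.2 + 1), p) : DEdge)}
  else
    {(((p.1 + 1, p.2), p) : DEdge), (((p.1 + 1, p.2 + 1), (p.1 + 1, p.2)) : DEdge),
     (((p.1, p.2 + 1), (p.1 + 1, p.2 + 1)) : DEdge), ((p, (p.1, p.2 + 1)) : DEdge)}

/-- Local modification of the directed edge set of a sock along the oriented unit
square `sq`: each edge of `sq` whose reverse is present gets removed, and the other
edges of `sq` get added. -/
def SqMove (E₀ E₁ sq : Finset DEdge) : Prop :=
  E₁ = (E₀ \ sq.image rev) ∪ sq.filter fun e => rev e ∉ E₀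

/-- The removed edges are exactly two *consecutive* edges of the square: this is the
local move of a trit (a jewel is moved across the diagonal of the square), not a flip. -/
def TwoAdjRemoved (E₀ sq : Finset DEdge) : Prop :=
  ∃ e ∈ sq, ∃ f ∈ sq, e ≠ f ∧ e.2 = f.1 ∧ rev e ∈ E₀ ∧ rev f ∈ E₀ ∧
    ∀ g ∈ sq, rev g ∈ E₀ → g = e ∨ g = f

/-- The three flip moves on socks (creating/destroying a unit square, sliding an edge
across a square, merging/splitting two cycles along opposite edges of a square). -/
def FlipMoveSock (s₀ s₁ : Sock) : Prop :=
  ∃ p o, SqMove (sockEdges s₀) (sockEdges s₁) (unitSq p o) ∧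
    ¬ TwoAdjRemoved (sockEdges s₀) (unitSq p o)

/-- The trit move on socks: a jewel is pushed into / pulled out of a cycle across a
corner. -/
def TritMoveSock (s₀ s₁ : Sock) : Prop :=
  ∃ p o, SqMove (sockEdges s₀) (sockEdges s₁) (unitSq p o) ∧
    TwoAdjRemoved (sockEdges s₀) (unitSq p o)

/-- Flip homotopy of socks in ℤ². -/
def FlipHomotopic : Sock → Sock → Prop := Relation.ReflTransGen FlipMoveSock

/-- A sock lies in the grid graph `G(R)` of the duplex region over `D`. -/
def SockIn (D : Finset Sq) (s : Sock) : Prop := sockVerts s ⊆ D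

/-- A flip or trit move between socks both lying in `G(R)`. -/
def FTMoveIn (D : Finset Sq) (s₀ s₁ : Sock) : Prop :=
  (FlipMoveSock s₀ s₁ ∨ TritMoveSock s₀ s₁) ∧ SockIn D s₀ ∧ SockIn D s₁

/-- The sock associated to a duplex tiling `T`: its directed edges are those of the
associated drawing of `T`, with trivial cycles (doubled edges) removed. -/
def SockOf (T : Finset (Finset Cell)) (s : Sock) : Prop :=
  sockEdges s = (tilingEdges T).filter fun e => rev e ∉ tilingEdges T

/-- The boundary of the square `[n−r, n+r] × [−r, r]` centered at `(n,0)` on the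
x-axis, as an oriented cycle of directed edges (`o = true`: counterclockwise). -/
def squareBoundary (n r : ℤ) (o : Bool) : Finset DEdge :=
  let fwd : Finset DEdge :=
    ((Finset.Icc (n - r) (n + r - 1)).image fun x => (((x, -r) : Sq), ((x + 1, -r) : Sq)))
    ∪ ((Finset.Icc (-r) (r - 1)).image fun y => (((n + r, y) : Sq), ((n + r, y + 1) : Sq)))
    ∪ ((Finset.Icc (n - r) (n + r - 1)).image fun x => (((x + 1, r) : Sq), ((x, r) : Sq)))
    ∪ ((Finset.Icc (-r) (r - 1)).image fun y => (((n - r, y + 1) : Sq), ((n - r, y) : Sq)))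
  if o then fwd else fwd.image rev

/-- `l` is a square cycle of radius `r` centered at `(n,0)` with orientation `o`. -/
def IsSquareCycle (l : List Sq) (n r : ℤ) (o : Bool) : Prop :=
  (cyclicPairs l).toFinset = squareBoundary n r o

/-- An untangled sock: every cycle is a square cycle centered on the x-axis, belonging
to a boxed jewel (all smaller concentric squares are present, with the same
orientation). -/
def Untangled (s : Sock) : Prop :=
  ∀ l ∈ s.cycles, ∃ n r o, 1 ≤ r ∧ IsSquareCycle l n r o ∧
    ∀ r', 1 ≤ r' → r' < r → ∃ l' ∈ s.cycles, IsSquareCycle l' n r' o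

/-! ### Embeddings into boxes -/

/-- The rectangle of squares with corners `a`, `b`. -/
def boxSq (a b : Sq) : Finset Sq := Finset.Icc a b

/-- The embedding of a duplex tiling of `D × [0,2]` into the two-floored box over
`boxSq a b`: the complement is tiled by z-dimers. -/
def embed2 (D : Finset Sq) (a b : Sq) (T : Finset (Finset Cell)) :
    Finset (Finset Cell) :=
  T ∪ (boxSq a b \ D).image zDimerAt

/-- The z-dimer joining the two bottom floors (z = 2, 3) over the square `s`. -/
def zDimerAt' (s : Sq) : Finset Cell := {(s.1, s.2, 2), (s.1, s.2, 3)}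

/-- The embedding of a duplex tiling into a four-floored box: the tiling occupies the
top two floors, the rest of the top two floors and all of the bottom two floors are
filled with z-dimers. -/
def embed4 (D : Finset Sq) (a b : Sq) (T : Finset (Finset Cell)) :
    Finset (Finset Cell) :=
  embed2 D a b T ∪ (boxSq a b).image zDimerAt'

/-!
A flip move along a unit square with lower-left corner `p` adds the oriented boundary of that
square to the sock as a chain (reversed edges cancel). Hence winding numbers change only at `p`,
and the set of vertices changes only at the four corners of the square. Two corners joined by a
side of the square that are both jewels have opposite colours and, since that side is not on the
sock, the same winding number, so their terms in `P` cancel. Going through the patterns of sides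
traversed in reverse by the sock, every pattern except exactly two consecutive sides (a trit)
leaves the jewel corners, before and after the move, paired along sides of the square; so the
corners contribute nothing on either side. If the square already shares an edge with the sock,
the whole oriented square is a cycle of the sock and the move changes nothing.
-/

lemma map_fst_cyclicPairs (l : List Sq) : (cyclicPairs l).map Prod.fst = l :=
  List.map_fst_zip (by simp)

lemma map_snd_cyclicPairs (l : List Sq) : (cyclicPairs l).map Prod.snd = l.rotate 1 :=
  List.map_snd_zip (by simp)

lemma fst_mem_of_mem_cyclicPairs {l : List Sq} {e : DEdge} (he : e ∈ cyclicPairs l) :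
    e.1 ∈ l :=
  map_fst_cyclicPairs l ▸ List.mem_map_of_mem he

lemma snd_mem_of_mem_cyclicPairs {l : List Sq} {e : DEdge} (he : e ∈ cyclicPairs l) :
    e.2 ∈ l :=
  List.mem_rotate.1 (map_snd_cyclicPairs l ▸ List.mem_map_of_mem he)

lemma mem_cyclicPairs_iff_getElem {l : List Sq} {e : DEdge} :
    e ∈ cyclicPairs l ↔ ∃ (i : ℕ) (hi : i < l.length),
      e = (l[i], l[(i + 1) % l.length]'(Nat.mod_lt _ (by omega))) := by
  simp [cyclicPairs, List.mem_iff_getElem, List.getElem_rotate, eq_comm]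

lemma rev_not_mem_cyclicPairs {l : List Sq} (hl : IsSimpleCycle l) {e : DEdge}
    (he : e ∈ cyclicPairs l) : rev e ∉ cyclicPairs l := by
  obtain ⟨hnd, hlen, -⟩ := hl
  obtain ⟨i, hi, rfl⟩ := mem_cyclicPairs_iff_getElem.1 he
  rintro hr
  obtain ⟨k, hk, hrk⟩ := mem_cyclicPairs_iff_getElem.1 hr
  simp only [rev, Prod.mk.injEq, hnd.getElem_inj_iff] at hrk
  obtain ⟨rfl, hback⟩ := hrk
  have : (i + 1 + 1) % l.length = i := by rw [← Nat.mod_add_mod]; exact hback.symm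
  rcases Nat.lt_or_ge (i + 1 + 1) l.length with h | h
  · rw [Nat.mod_eq_of_lt h] at this; omega
  · rw [Nat.mod_eq_sub_mod h, Nat.mod_eq_of_lt (by omega)] at this; omega

section Sock

variable {s : Sock}

lemma mem_sockEdges {e : DEdge} : e ∈ sockEdges s ↔ ∃ l ∈ s.cycles, e ∈ cyclicPairs l := by
  simp [sockEdges, Finset.mem_sup]

lemma mem_sockVerts {v : Sq} : v ∈ sockVerts s ↔ ∃ l ∈ s.cycles, v ∈ l := by
  simp [sockVerts, Finset.mem_sup]

lemma Sock.eq_of_mem_of_mem {l l' : List Sq} (hl : l ∈ s.cycles) (hl' : l' ∈ s.cycles)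
    {v : Sq} (hv : v ∈ l) (hv' : v ∈ l') : l = l' :=
  by_contra fun hne => s.disj l hl l' hl' hne v hv hv'

lemma image_fst_sockEdges (s : Sock) : (sockEdges s).image Prod.fst = sockVerts s := by
  ext v
  simp only [Finset.mem_image, mem_sockEdges, mem_sockVerts]
  constructor
  · rintro ⟨e, ⟨l, hl, he⟩, rfl⟩
    exact ⟨l, hl, fst_mem_of_mem_cyclicPairs he⟩
  · rintro ⟨l, hl, hv⟩
    obtain ⟨e, he, rfl⟩ := List.mem_map.1 ((map_fst_cyclicPairs l).symm ▸ hv)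
    exact ⟨e, ⟨l, hl, he⟩, rfl⟩

lemma image_snd_sockEdges (s : Sock) : (sockEdges s).image Prod.snd = sockVerts s := by
  ext v
  simp only [Finset.mem_image, mem_sockEdges, mem_sockVerts]
  constructor
  · rintro ⟨e, ⟨l, hl, he⟩, rfl⟩
    exact ⟨l, hl, snd_mem_of_mem_cyclicPairs he⟩
  · rintro ⟨l, hl, hv⟩
    have hv' : v ∈ (cyclicPairs l).map Prod.snd := by
      rw [map_snd_cyclicPairs]; exact List.mem_rotate.2 hv
    obtain ⟨e, he, rfl⟩ := List.mem_map.1 hv'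
    exact ⟨e, ⟨l, hl, he⟩, rfl⟩

lemma mem_sockVerts_iff_exists_fst {v : Sq} : v ∈ sockVerts s ↔ ∃ e ∈ sockEdges s, e.1 = v := by
  rw [← image_fst_sockEdges, Finset.mem_image]

lemma mem_sockVerts_iff_exists_snd {v : Sq} : v ∈ sockVerts s ↔ ∃ e ∈ sockEdges s, e.2 = v := by
  rw [← image_snd_sockEdges, Finset.mem_image]

lemma fst_mem_sockVerts {e : DEdge} (he : e ∈ sockEdges s) : e.1 ∈ sockVerts s :=
  mem_sockVerts_iff_exists_fst.2 ⟨e, he, rfl⟩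

lemma snd_mem_sockVerts {e : DEdge} (he : e ∈ sockEdges s) : e.2 ∈ sockVerts s :=
  mem_sockVerts_iff_exists_snd.2 ⟨e, he, rfl⟩

lemma sockEdges_eq_of_fst_eq {e f : DEdge} (he : e ∈ sockEdges s) (hf : f ∈ sockEdges s)
    (h : e.1 = f.1) : e = f := by
  obtain ⟨l, hl, hel⟩ := mem_sockEdges.1 he
  obtain ⟨l', hl', hfl⟩ := mem_sockEdges.1 hf
  obtain rfl := s.eq_of_mem_of_mem hl hl' (fst_mem_of_mem_cyclicPairs hel)
    (h ▸ fst_mem_of_mem_cyclicPairs hfl)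
  refine List.inj_on_of_nodup_map ?_ hel hfl h
  rw [map_fst_cyclicPairs]
  exact (s.simple l hl).1

lemma sockEdges_eq_of_snd_eq {e f : DEdge} (he : e ∈ sockEdges s) (hf : f ∈ sockEdges s)
    (h : e.2 = f.2) : e = f := by
  obtain ⟨l, hl, hel⟩ := mem_sockEdges.1 he
  obtain ⟨l', hl', hfl⟩ := mem_sockEdges.1 hf
  obtain rfl := s.eq_of_mem_of_mem hl hl' (snd_mem_of_mem_cyclicPairs hel)
    (h ▸ snd_mem_of_mem_cyclicPairs hfl)
  refine List.inj_on_of_nodup_map ?_ hel hfl h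
  rw [map_snd_cyclicPairs, List.nodup_rotate]
  exact (s.simple l hl).1

lemma rev_not_mem_sockEdges {e : DEdge} (he : e ∈ sockEdges s) : rev e ∉ sockEdges s := by
  intro hr
  obtain ⟨l, hl, hel⟩ := mem_sockEdges.1 he
  obtain ⟨l', hl', hrl⟩ := mem_sockEdges.1 hr
  obtain rfl := s.eq_of_mem_of_mem hl hl' (fst_mem_of_mem_cyclicPairs hel)
    (snd_mem_of_mem_cyclicPairs hrl)
  exact rev_not_mem_cyclicPairs (s.simple l hl) hel hrl

lemma adj2_of_mem_sockEdges {e : DEdge} (he : e ∈ sockEdges s) : adj2 e.1 e.2 := by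
  obtain ⟨l, hl, hel⟩ := mem_sockEdges.1 he
  exact (s.simple l hl).2.2 e hel

/-- Every vertex of a sock is the tail of exactly one edge and the head of exactly one. -/
lemma sum_sockEdges_snd_sub_fst (s : Sock) (g : Sq → ℤ) :
    ∑ e ∈ sockEdges s, (g e.2 - g e.1) = 0 := by
  rw [Finset.sum_sub_distrib, sub_eq_zero]
  calc ∑ e ∈ sockEdges s, g e.2 = ∑ v ∈ sockVerts s, g v := by
        rw [← image_snd_sockEdges, Finset.sum_image
          fun e he f hf h => sockEdges_eq_of_snd_eq he hf h]
    _ = ∑ e ∈ sockEdges s, g e.1 := by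
        rw [← image_fst_sockEdges, Finset.sum_image
          fun e he f hf h => sockEdges_eq_of_fst_eq he hf h]

end Sock

lemma edgeWind_swap (j a b : Sq) : edgeWind j b a = -edgeWind j a b := by
  unfold edgeWind
  split_ifs <;> omega

lemma edgeWind_eq_sub_of_lt {j a b : Sq} (hab : adj2 a b) (ha : j.1 < a.1) :
    edgeWind j a b = (if j.2 < b.2 then 1 else 0) - (if j.2 < a.2 then 1 else 0) := by
  unfold edgeWind adj2 at *
  split_ifs <;> omega

lemma windS_eq_zero_of_forall_lt {s : Sock} {j : Sq} (h : ∀ v ∈ sockVerts s, j.1 < v.1) :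
    windS s j = 0 := by
  rw [windS, ← sum_sockEdges_snd_sub_fst s fun v => if j.2 < v.2 then 1 else 0]
  exact Finset.sum_congr rfl fun e he => edgeWind_eq_sub_of_lt (adj2_of_mem_sockEdges he)
    (h _ (fst_mem_sockVerts he))

lemma mem_sockBox_of_windS_ne_zero {s : Sock} {j : Sq} (h : windS s j ≠ 0) :
    j ∈ sockBox s := by
  obtain ⟨a, ha, hja⟩ : ∃ a ∈ sockVerts s, a.1 ≤ j.1 := by
    by_contra! hc
    exact h (windS_eq_zero_of_forall_lt hc)
  obtain ⟨e, he, hne⟩ := Finset.exists_ne_zero_of_sum_ne_zero h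
  obtain ⟨b, hb, hjb, hbj⟩ : ∃ b ∈ sockVerts s, j.1 < b.1 ∧ b.2 = j.2 := by
    unfold edgeWind at hne
    split_ifs at hne with h₁ h₂
    · exact ⟨e.1, fst_mem_sockVerts he, h₁.2.1, h₁.2.2.1⟩
    · exact ⟨e.2, snd_mem_sockVerts he, h₂.1 ▸ h₂.2.1, h₂.2.2.2⟩
    · exact absurd rfl hne
  simp only [sockBox, Finset.mem_biUnion, Finset.mem_Icc]
  refine ⟨a, ha, b, hb, ?_⟩
  simp only [Prod.le_def, Prod.fst_inf, Prod.snd_inf, Prod.fst_sup, Prod.snd_sup]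
  omega

lemma windS_eq_windS_right {s : Sock} {j : Sq} (h : ((j.1 + 1, j.2) : Sq) ∉ sockVerts s) :
    windS s j = windS s (j.1 + 1, j.2) := by
  refine Finset.sum_congr rfl fun e he => ?_
  have h₁ : e.1 ≠ (j.1 + 1, j.2) := fun h' => h (h' ▸ fst_mem_sockVerts he)
  have h₂ : e.2 ≠ (j.1 + 1, j.2) := fun h' => h (h' ▸ snd_mem_sockVerts he)
  simp only [ne_eq, Prod.ext_iff] at h₁ h₂
  unfold edgeWind
  split_ifs <;> omega

lemma edgeWind_sub_edgeWind_up {j a b : Sq} (hab : adj2 a b) (ha : a ≠ (j.1, j.2 + 1))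
    (hb : b ≠ (j.1, j.2 + 1)) :
    edgeWind j a b - edgeWind (j.1, j.2 + 1) a b =
      (if j.1 < b.1 ∧ b.2 = j.2 + 1 then 1 else 0) -
        (if j.1 < a.1 ∧ a.2 = j.2 + 1 then 1 else 0) := by
  obtain ⟨a1, a2⟩ := a
  obtain ⟨b1, b2⟩ := b
  simp only [adj2, ne_eq, Prod.ext_iff] at hab ha hb
  obtain ⟨rfl, rfl⟩ | ⟨rfl, rfl⟩ | ⟨rfl, rfl⟩ | ⟨rfl, rfl⟩ :
      (b1 = a1 + 1 ∧ b2 = a2) ∨ (b1 = a1 - 1 ∧ b2 = a2) ∨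
        (b1 = a1 ∧ b2 = a2 + 1) ∨ (b1 = a1 ∧ b2 = a2 - 1) := by omega
  all_goals unfold edgeWind; split_ifs <;> omega

lemma windS_eq_windS_up {s : Sock} {j : Sq} (h : ((j.1, j.2 + 1) : Sq) ∉ sockVerts s) :
    windS s j = windS s (j.1, j.2 + 1) := by
  rw [← sub_eq_zero, windS, windS, ← Finset.sum_sub_distrib,
    ← sum_sockEdges_snd_sub_fst s fun v => if j.1 < v.1 ∧ v.2 = j.2 + 1 then 1 else 0]
  exact Finset.sum_congr rfl fun e he => edgeWind_sub_edgeWind_up (adj2_of_mem_sockEdges he)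
    (fun h' => h (h' ▸ fst_mem_sockVerts he)) (fun h' => h (h' ▸ snd_mem_sockVerts he))

def psockTerm (s : Sock) (j : Sq) : LaurentPolynomial ℤ :=
  if j ∈ sockVerts s ∨ windS s j = 0 then 0
  else (if sqBlack j then 1 else -1) * LaurentPolynomial.T (windS s j)

lemma psockTerm_of_mem {s : Sock} {j : Sq} (h : j ∈ sockVerts s) : psockTerm s j = 0 :=
  if_pos (Or.inl h)

lemma Psock_eq_sum_psockTerm (s : Sock) {U : Finset Sq} (hU : sockBox s ⊆ U) :
    Psock s = ∑ j ∈ U, psockTerm s j := by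
  rw [Psock, Finset.sum_filter, ← Finset.sum_subset (f := psockTerm s) hU fun j _ hj =>
    if_pos (Or.inr (not_not.1 fun hw => hj (mem_sockBox_of_windS_ne_zero hw)))]
  refine Finset.sum_congr rfl fun j _ => ?_
  simp only [psockTerm, ne_eq, ← not_or, ite_not]

lemma Psock_congr {s₀ s₁ : Sock} (h : sockEdges s₀ = sockEdges s₁) : Psock s₀ = Psock s₁ := by
  have hV : sockVerts s₀ = sockVerts s₁ := by
    rw [← image_fst_sockEdges, h, image_fst_sockEdges]
  unfold Psock sockBox windS
  rw [hV, h]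

def corner (p : Sq) : Fin 4 → Sq := ![p, (p.1 + 1, p.2), (p.1 + 1, p.2 + 1), (p.1, p.2 + 1)]

/-- The step in `Fin 4` from a corner to the next one along the oriented square `unitSq p o`. -/
def sqDir (o : Bool) : Fin 4 := if o then 1 else 3

def sqEdge (p : Sq) (o : Bool) (i : Fin 4) : DEdge := (corner p i, corner p (i + sqDir o))

lemma eq_or_eq_add_sqDir (o : Bool) (i k : Fin 4) :
    k = i ∨ k = i + sqDir o ∨ k = i + sqDir o + sqDir o ∨ k = i + sqDir o + sqDir o + sqDir o := by
  revert i k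
  cases o <;> decide

lemma add_sqDir_ne_self (o : Bool) (i : Fin 4) : i + sqDir o ≠ i := by
  revert i
  cases o <;> decide

lemma add_sqDir_add_sqDir_ne_self (o : Bool) (i : Fin 4) : i + sqDir o + sqDir o ≠ i := by
  revert i
  cases o <;> decide

lemma corner_injective (p : Sq) : Function.Injective (corner p) := by
  intro i k h
  fin_cases i <;> fin_cases k <;> simp_all [corner, Prod.ext_iff]

lemma mem_unitSq_iff {p : Sq} {o : Bool} {e : DEdge} : e ∈ unitSq p o ↔ ∃ i, sqEdge p o i = e := by
  cases o
  · simp [unitSq, sqEdge, sqDir, corner, Fin.exists_fin_succ, eq_comm]; tauto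
  · simp [unitSq, sqEdge, sqDir, corner, Fin.exists_fin_succ, eq_comm]

lemma sqEdge_mem_unitSq (p : Sq) (o : Bool) (i : Fin 4) : sqEdge p o i ∈ unitSq p o :=
  mem_unitSq_iff.2 ⟨i, rfl⟩

lemma sum_unitSq_edgeWind_of_ne {p j : Sq} (o : Bool) (hj : j ≠ p) :
    ∑ e ∈ unitSq p o, edgeWind j e.1 e.2 = 0 := by
  have himg : unitSq p o = Finset.univ.image (sqEdge p o) := by
    ext e; simp [mem_unitSq_iff]
  rw [himg, Finset.sum_image fun i _ k _ h => corner_injective p (congrArg Prod.fst h),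
    Fin.sum_univ_four]
  obtain ⟨p1, p2⟩ := p
  obtain ⟨j1, j2⟩ := j
  simp only [ne_eq, Prod.ext_iff] at hj
  cases o <;> simp [sqEdge, sqDir, corner, edgeWind] <;> split_ifs <;> omega

lemma sqBlack_corner_add_one (p : Sq) (i : Fin 4) :
    sqBlack (corner p (i + 1)) ↔ ¬sqBlack (corner p i) := by
  fin_cases i <;> simp [corner, sqBlack] <;> omega

lemma windS_corner_add_one {s : Sock} {p : Sq} {i : Fin 4} (h₀ : corner p i ∉ sockVerts s)
    (h₁ : corner p (i + 1) ∉ sockVerts s) :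
    windS s (corner p i) = windS s (corner p (i + 1)) := by
  fin_cases i
  · exact windS_eq_windS_right h₁
  · exact windS_eq_windS_up h₁
  · exact (windS_eq_windS_right (j := (p.1, p.2 + 1)) h₀).symm
  · exact (windS_eq_windS_up (j := p) h₀).symm

/-- Two adjacent jewels at the corners of a unit square have opposite colours and the same
winding number, so their terms cancel. -/
lemma psockTerm_corner_add_psockTerm_corner_add_one {s : Sock} {p : Sq} {i : Fin 4}
    (h₀ : corner p i ∉ sockVerts s) (h₁ : corner p (i + 1) ∉ sockVerts s) :
    psockTerm s (corner p i) + psockTerm s (corner p (i + 1)) = 0 := by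
  have hcol := sqBlack_corner_add_one p i
  unfold psockTerm
  rw [windS_corner_add_one h₀ h₁]
  split_ifs <;> simp_all

def IsEmptySideOrUniv (F : Fin 4 → Prop) : Prop :=
  (∀ i, ¬F i) ∨ (∃ i, F i ∧ F (i + 1) ∧ ¬F (i + 2) ∧ ¬F (i + 3)) ∨ ∀ i, F i

lemma sum_psockTerm_corner_eq_zero {s : Sock} {p : Sq}
    (h : IsEmptySideOrUniv fun i => corner p i ∉ sockVerts s) :
    ∑ i, psockTerm s (corner p i) = 0 := by
  rcases h with hnone | ⟨i, h₀, h₁, h₂, h₃⟩ | hall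
  · exact Finset.sum_eq_zero fun i _ => psockTerm_of_mem (not_not.1 (hnone i))
  · rw [← Equiv.sum_comp (Equiv.addLeft i), Fin.sum_univ_four]
    simp only [Equiv.coe_addLeft, add_zero]
    rw [psockTerm_corner_add_psockTerm_corner_add_one h₀ h₁, psockTerm_of_mem (not_not.1 h₂),
      psockTerm_of_mem (not_not.1 h₃), add_zero, add_zero]
  · have h₀₁ : psockTerm s (corner p 0) + psockTerm s (corner p 1) = 0 :=
      psockTerm_corner_add_psockTerm_corner_add_one (hall 0) (hall 1)
    have h₂₃ : psockTerm s (corner p 2) + psockTerm s (corner p 3) = 0 :=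
      psockTerm_corner_add_psockTerm_corner_add_one (hall 2) (hall 3)
    rw [Fin.sum_univ_four, add_assoc, h₀₁, h₂₃, add_zero]

/-- With `b i` recording that side `i` of the square is traversed backwards before the move,
the two predicates below describe the jewel corners after and before the move. -/
lemma isEmptySideOrUniv_of_forall_not_two_consecutive (o : Bool) (b : Fin 4 → Bool)
    (h : ∀ i, ¬(b i ∧ b (i + sqDir o) ∧ ¬b (i + sqDir o + sqDir o) ∧
      ¬b (i + sqDir o + sqDir o + sqDir o))) :
    IsEmptySideOrUniv (fun i => b i ∧ b (i - sqDir o)) ∧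
      IsEmptySideOrUniv (fun i => ¬b i ∧ ¬b (i - sqDir o)) := by
  unfold IsEmptySideOrUniv
  revert b
  cases o <;> decide

section SqMove

variable {E₀ E₁ sq : Finset DEdge}

lemma rev_rev (e : DEdge) : rev (rev e) = e := rfl

lemma rev_injective : Function.Injective rev := fun _ _ h => congrArg rev h

lemma mem_of_sqMove_iff (hmv : SqMove E₀ E₁ sq) {e : DEdge} :
    e ∈ E₁ ↔ (e ∈ E₀ ∧ rev e ∉ sq) ∨ (e ∈ sq ∧ rev e ∉ E₀) := by
  rw [hmv, Finset.mem_union, Finset.mem_sdiff, Finset.mem_filter, Finset.mem_image]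
  refine or_congr_left (and_congr_right fun _ => not_congr ⟨?_, fun h => ⟨rev e, h, rfl⟩⟩)
  rintro ⟨f, hf, rfl⟩
  exact hf

/-- As chains, a square move adds the boundary of the square, reversed edges cancelling. -/
lemma sum_of_sqMove {w : DEdge → ℤ} (hw : ∀ e, w (rev e) = -w e) (hmv : SqMove E₀ E₁ sq)
    (hdisj : Disjoint sq E₀) : ∑ e ∈ E₁, w e = ∑ e ∈ E₀, w e + ∑ e ∈ sq, w e := by
  have hcancel : E₀ ∩ sq.image rev = (sq.filter fun e => rev e ∈ E₀).image rev := by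
    ext e
    simp only [Finset.mem_inter, Finset.mem_image, Finset.mem_filter]
    constructor
    · rintro ⟨he, f, hf, rfl⟩
      exact ⟨f, ⟨hf, he⟩, rfl⟩
    · rintro ⟨f, ⟨hf, hfe⟩, rfl⟩
      exact ⟨hfe, f, hf, rfl⟩
  have hunion : Disjoint (E₀ \ sq.image rev) (sq.filter fun e => rev e ∉ E₀) :=
    Finset.disjoint_left.2 fun e he hf =>
      Finset.disjoint_left.1 hdisj (Finset.mem_filter.1 hf).1 (Finset.mem_sdiff.1 he).1
  rw [hmv, Finset.sum_union hunion, ← Finset.sdiff_inter_self_left,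
    Finset.sum_sdiff_eq_sub Finset.inter_subset_left, hcancel,
    Finset.sum_image rev_injective.injOn, ← Finset.sum_filter_add_sum_filter_not sq
      fun e => rev e ∈ E₀]
  simp only [hw, Finset.sum_neg_distrib]
  ring

end SqMove

section UnitSqMove

variable {s₀ s₁ : Sock} {p : Sq} {o : Bool}

lemma fst_rev_sqEdge_sub (p : Sq) (o : Bool) (i : Fin 4) :
    (rev (sqEdge p o (i - sqDir o))).1 = corner p i := by
  rw [rev, sqEdge, sub_add_cancel]

lemma eq_sqEdge_of_fst_eq {e : DEdge} {i : Fin 4} (he : e ∈ unitSq p o) (h : e.1 = corner p i) :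
    e = sqEdge p o i := by
  obtain ⟨k, rfl⟩ := mem_unitSq_iff.1 he
  rw [corner_injective p h]

lemma eq_sqEdge_sub_of_snd_eq {e : DEdge} {i : Fin 4} (he : e ∈ unitSq p o)
    (h : e.2 = corner p i) : e = sqEdge p o (i - sqDir o) := by
  obtain ⟨k, rfl⟩ := mem_unitSq_iff.1 he
  have h' : corner p (k + sqDir o) = corner p i := h
  rw [← corner_injective p h', add_sub_cancel_right]

lemma windS_eq_of_sqMove (hmv : SqMove (sockEdges s₀) (sockEdges s₁) (unitSq p o))
    (hdisj : Disjoint (unitSq p o) (sockEdges s₀)) {j : Sq} (hj : j ≠ p) :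
    windS s₁ j = windS s₀ j := by
  rw [windS, sum_of_sqMove (fun e => edgeWind_swap j e.1 e.2) hmv hdisj,
    sum_unitSq_edgeWind_of_ne o hj, add_zero, windS]

lemma mem_sockVerts_of_sqMove_iff (hmv : SqMove (sockEdges s₀) (sockEdges s₁) (unitSq p o))
    {v : Sq} (hv : v ∉ Set.range (corner p)) : v ∈ sockVerts s₁ ↔ v ∈ sockVerts s₀ := by
  simp only [mem_sockVerts_iff_exists_fst, mem_of_sqMove_iff hmv]
  constructor
  · rintro ⟨g, ⟨hg, -⟩ | ⟨hg, -⟩, rfl⟩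
    · exact ⟨g, hg, rfl⟩
    · obtain ⟨i, rfl⟩ := mem_unitSq_iff.1 hg
      exact absurd ⟨i, rfl⟩ hv
  · rintro ⟨g, hg, rfl⟩
    refine ⟨g, Or.inl ⟨hg, fun hr => hv ?_⟩, rfl⟩
    obtain ⟨i, hi⟩ := mem_unitSq_iff.1 hr
    exact ⟨i + sqDir o, congrArg Prod.snd hi⟩

lemma corner_mem_sockVerts_iff_of_sqMove_left
    (hmv : SqMove (sockEdges s₀) (sockEdges s₁) (unitSq p o))
    (hdisj : Disjoint (unitSq p o) (sockEdges s₀)) (i : Fin 4) :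
    corner p i ∈ sockVerts s₀ ↔
      rev (sqEdge p o i) ∈ sockEdges s₀ ∨ rev (sqEdge p o (i - sqDir o)) ∈ sockEdges s₀ := by
  constructor
  · intro hv
    by_contra! ⟨hi, hsub⟩
    obtain ⟨g, hg, hg1⟩ := mem_sockVerts_iff_exists_fst.1 hv
    have hg₁ : g ∈ sockEdges s₁ := (mem_of_sqMove_iff hmv).2 <| Or.inl ⟨hg, fun hr => hsub <| by
      rwa [← eq_sqEdge_sub_of_snd_eq hr hg1, rev_rev]⟩
    have hi₁ : sqEdge p o i ∈ sockEdges s₁ :=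
      (mem_of_sqMove_iff hmv).2 (Or.inr ⟨sqEdge_mem_unitSq p o i, hi⟩)
    rw [sockEdges_eq_of_fst_eq hg₁ hi₁ hg1] at hg
    exact Finset.disjoint_left.1 hdisj (sqEdge_mem_unitSq p o i) hg
  · rintro (h | h)
    · exact snd_mem_sockVerts h
    · exact fst_rev_sqEdge_sub p o i ▸ fst_mem_sockVerts h

lemma corner_mem_sockVerts_iff_of_sqMove_right
    (hmv : SqMove (sockEdges s₀) (sockEdges s₁) (unitSq p o)) (i : Fin 4) :
    corner p i ∈ sockVerts s₁ ↔
      rev (sqEdge p o i) ∉ sockEdges s₀ ∨ rev (sqEdge p o (i - sqDir o)) ∉ sockEdges s₀ := by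
  constructor
  · intro hv
    by_contra! ⟨hi, hsub⟩
    obtain ⟨g, hg, hg1⟩ := mem_sockVerts_iff_exists_fst.1 hv
    rcases (mem_of_sqMove_iff hmv).1 hg with ⟨hg₀, hgr⟩ | ⟨hgsq, hgr⟩
    · rw [sockEdges_eq_of_fst_eq hg₀ hsub (hg1.trans (fst_rev_sqEdge_sub p o i).symm),
        rev_rev] at hgr
      exact hgr (sqEdge_mem_unitSq p o _)
    · rw [eq_sqEdge_of_fst_eq hgsq hg1] at hgr
      exact hgr hi
  · rintro (h | h)
    · exact fst_mem_sockVerts ((mem_of_sqMove_iff hmv).2 (Or.inr ⟨sqEdge_mem_unitSq p o i, h⟩))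
    · have := snd_mem_sockVerts
        ((mem_of_sqMove_iff hmv).2 (Or.inr ⟨sqEdge_mem_unitSq p o (i - sqDir o), h⟩))
      rwa [sqEdge, sub_add_cancel] at this

/-- A side of the square present before the move forces the previous side to be present:
otherwise their common corner would have two outgoing edges before the move or two incoming
edges after it. -/
lemma sqEdge_mem_of_sqEdge_add_mem (hmv : SqMove (sockEdges s₀) (sockEdges s₁) (unitSq p o))
    {i : Fin 4} (hnext : sqEdge p o (i + sqDir o) ∈ sockEdges s₀) :
    sqEdge p o i ∈ sockEdges s₀ := by
  by_contra hi
  by_cases hrev : rev (sqEdge p o i) ∈ sockEdges s₀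
  · have heq : corner p i = corner p (i + sqDir o + sqDir o) :=
      congrArg Prod.snd (sockEdges_eq_of_fst_eq hrev hnext rfl)
    exact add_sqDir_add_sqDir_ne_self o i (corner_injective p heq).symm
  obtain ⟨h, hh, hh2⟩ : ∃ h ∈ sockEdges s₀, h.2 = corner p (i + sqDir o) :=
    mem_sockVerts_iff_exists_snd.1 (fst_mem_sockVerts hnext)
  have hh₁ : h ∈ sockEdges s₁ := (mem_of_sqMove_iff hmv).2 <| Or.inl ⟨hh, fun hr =>
    rev_not_mem_sockEdges hnext <| by rwa [← eq_sqEdge_of_fst_eq hr hh2, rev_rev]⟩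
  have hi₁ : sqEdge p o i ∈ sockEdges s₁ :=
    (mem_of_sqMove_iff hmv).2 (Or.inr ⟨sqEdge_mem_unitSq p o i, hrev⟩)
  exact hi (sockEdges_eq_of_snd_eq hh₁ hi₁ hh2 ▸ hh)

lemma sockEdges_eq_of_sqMove_of_not_disjoint
    (hmv : SqMove (sockEdges s₀) (sockEdges s₁) (unitSq p o))
    (hK : ¬Disjoint (unitSq p o) (sockEdges s₀)) : sockEdges s₁ = sockEdges s₀ := by
  obtain ⟨e, he, he₀⟩ := Finset.not_disjoint_iff.1 hK
  obtain ⟨i, rfl⟩ := mem_unitSq_iff.1 he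
  have hsq : unitSq p o ⊆ sockEdges s₀ := by
    intro e he
    obtain ⟨k, rfl⟩ := mem_unitSq_iff.1 he
    have back : ∀ {i}, sqEdge p o (i + sqDir o) ∈ sockEdges s₀ → sqEdge p o i ∈ sockEdges s₀ :=
      sqEdge_mem_of_sqEdge_add_mem hmv
    rcases eq_or_eq_add_sqDir o k i with rfl | rfl | rfl | rfl
    exacts [he₀, back he₀, back (back he₀), back (back (back he₀))]
  ext e
  rw [mem_of_sqMove_iff hmv]
  constructor
  · rintro (⟨h, -⟩ | ⟨h, -⟩)
    exacts [h, hsq h]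
  · exact fun h => Or.inl ⟨h, fun hr => rev_not_mem_sockEdges h (hsq hr)⟩

lemma twoAdjRemoved_of_consecutive {E : Finset DEdge} {i : Fin 4}
    (h₀ : rev (sqEdge p o i) ∈ E) (h₁ : rev (sqEdge p o (i + sqDir o)) ∈ E)
    (h₂ : rev (sqEdge p o (i + sqDir o + sqDir o)) ∉ E)
    (h₃ : rev (sqEdge p o (i + sqDir o + sqDir o + sqDir o)) ∉ E) :
    TwoAdjRemoved E (unitSq p o) := by
  refine ⟨_, sqEdge_mem_unitSq p o i, _, sqEdge_mem_unitSq p o (i + sqDir o), fun h => ?_,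
    rfl, h₀, h₁, fun g hg hgE => ?_⟩
  · have hc : corner p i = corner p (i + sqDir o) := congrArg Prod.fst h
    exact add_sqDir_ne_self o i (corner_injective p hc).symm
  · obtain ⟨k, rfl⟩ := mem_unitSq_iff.1 hg
    rcases eq_or_eq_add_sqDir o i k with rfl | rfl | rfl | rfl
    exacts [Or.inl rfl, Or.inr rfl, absurd hgE h₂, absurd hgE h₃]

end UnitSqMove

lemma Psock_eq_of_eqOn_compl_corners {s₀ s₁ : Sock} {p : Sq}
    (hwind : ∀ j ∉ Set.range (corner p), windS s₁ j = windS s₀ j)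
    (hverts : ∀ v ∉ Set.range (corner p), v ∈ sockVerts s₁ ↔ v ∈ sockVerts s₀)
    (h₀ : IsEmptySideOrUniv fun i => corner p i ∉ sockVerts s₀)
    (h₁ : IsEmptySideOrUniv fun i => corner p i ∉ sockVerts s₁) : Psock s₀ = Psock s₁ := by
  set C := Finset.univ.image (corner p)
  set U := sockBox s₀ ∪ sockBox s₁ ∪ C
  have hoff : ∀ j ∈ U, j ∉ C → psockTerm s₀ j - psockTerm s₁ j = 0 := by
    intro j _ hj
    have hj' : j ∉ Set.range (corner p) := by simpa [C] using hj
    simp only [psockTerm, hwind j hj', hverts j hj', sub_self]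
  rw [Psock_eq_sum_psockTerm s₀ (U := U) (by intro j; simp +contextual [U]),
    Psock_eq_sum_psockTerm s₁ (U := U) (by intro j; simp +contextual [U]), ← sub_eq_zero,
    ← Finset.sum_sub_distrib, ← Finset.sum_subset Finset.subset_union_right hoff,
    Finset.sum_image (corner_injective p).injOn, Finset.sum_sub_distrib,
    sum_psockTerm_corner_eq_zero h₀, sum_psockTerm_corner_eq_zero h₁, sub_zero]

lemma Psock_eq_of_flipMoveSock {s₀ s₁ : Sock} (h : FlipMoveSock s₀ s₁) : Psock s₀ = Psock s₁ := by
  obtain ⟨p, o, hmv, hflip⟩ := h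
  by_cases hdisj : Disjoint (unitSq p o) (sockEdges s₀)
  swap
  · exact Psock_congr (sockEdges_eq_of_sqMove_of_not_disjoint hmv hdisj).symm
  set b : Fin 4 → Bool := fun i => decide (rev (sqEdge p o i) ∈ sockEdges s₀)
  obtain ⟨hjewels₁, hjewels₀⟩ := isEmptySideOrUniv_of_forall_not_two_consecutive o b fun i hi =>
    hflip (twoAdjRemoved_of_consecutive (by simpa [b] using hi.1) (by simpa [b] using hi.2.1)
      (by simpa [b] using hi.2.2.1) (by simpa [b] using hi.2.2.2))
  refine Psock_eq_of_eqOn_compl_corners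
    (fun j hj => windS_eq_of_sqMove hmv hdisj fun hjp => hj ⟨0, hjp.symm⟩)
    (fun v hv => mem_sockVerts_of_sqMove_iff hmv hv) ?_ ?_
  · convert hjewels₀ using 2 with i
    simp [b, corner_mem_sockVerts_iff_of_sqMove_left hmv hdisj]
  · convert hjewels₁ using 2 with i
    simp [b, corner_mem_sockVerts_iff_of_sqMove_right hmv]

/-- Flip homotopic systems of cycles in ℤ² have the same invariant. -/
theorem Psock_flipHomotopic_invariant (s₀ s₁ : Sock) (h : FlipHomotopic s₀ s₁) :
    Psock s₀ = Psock s₁ := by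
  induction h with
  | refl => rfl
  | tail _ hstep ih => exact ih.trans (Psock_eq_of_flipMoveSock hstep)
end
end

section
/- If t₀ and t₁ are tilings of a duplex region R lying in the same flip connected component of R, then for every two-floored box B containing R, the embeddings of t₀ and t₁ in B lie in the same flip connected component of B. -/
noncomputable section
open Classical
attribute [local instance] Classical.propDecidable

theorem zDimerAt_not_subset_duplexCells {D : Finset Sq} {s : Sq} (hs : s ∉ D) :
    ¬ zDimerAt s ⊆ duplexCells D := by
  intro h
  have h₀ : ((s.1, s.2, 0) : Cell) ∈ duplexCells D := h (by simp [zDimerAt])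
  simp only [duplexCells, twoStoryCells, floorCells, Finset.mem_union, Finset.mem_image,
    Prod.mk.injEq] at h₀
  rcases h₀ with ⟨x, hx, h₁, h₂, -⟩ | ⟨-, -, -, -, h₃⟩
  · exact hs (Prod.ext h₁ h₂ ▸ hx)
  · exact one_ne_zero h₃

namespace FlipStep

variable {T T' : Finset (Finset Cell)}

theorem subset_of_subset {R : Finset Cell} (h : FlipStep T T') (hT : ∀ d ∈ T, d ⊆ R) :
    ∀ d ∈ T', d ⊆ R := by
  obtain ⟨d₁, d₂, d₃, d₄, h₁, h₂, -, -, -, -, -, -, -, -, hu, -, hrest⟩ := h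
  have h₃₄ : d₃ ∪ d₄ ⊆ R := hu ▸ Finset.union_subset (hT d₁ h₁) (hT d₂ h₂)
  intro d hd
  by_cases hd₃₄ : d ∈ ({d₃, d₄} : Finset (Finset Cell))
  · rcases Finset.mem_insert.1 hd₃₄ with rfl | hd₄
    · exact Finset.union_subset_left h₃₄
    · exact Finset.mem_singleton.1 hd₄ ▸ Finset.union_subset_right h₃₄
  · have : d ∈ T \ {d₁, d₂} := hrest ▸ Finset.mem_sdiff.2 ⟨hd, hd₃₄⟩
    exact hT d (Finset.mem_sdiff.1 this).1

theorem union_right {E : Finset (Finset Cell)} (h : FlipStep T T') (hT : Disjoint T E)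
    (hT' : Disjoint T' E) : FlipStep (T ∪ E) (T' ∪ E) := by
  obtain ⟨d₁, d₂, d₃, d₄, h₁, h₂, h₃, h₄, i₁, i₂, i₃, i₄, dj₁₂, dj₃₄, hu, hne, hrest⟩ := h
  have union_sdiff {S : Finset (Finset Cell)} {e₁ e₂ : Finset Cell} (hS : Disjoint S E)
      (he₁ : e₁ ∈ S) (he₂ : e₂ ∈ S) : (S ∪ E) \ {e₁, e₂} = S \ {e₁, e₂} ∪ E := by
    rw [Finset.union_sdiff_distrib, Finset.sdiff_eq_self_of_disjoint (s := E)]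
    simp only [Finset.disjoint_insert_right, Finset.disjoint_singleton_right]
    exact ⟨Finset.disjoint_left.1 hS he₁, Finset.disjoint_left.1 hS he₂⟩
  refine ⟨d₁, d₂, d₃, d₄, Finset.mem_union_left _ h₁, Finset.mem_union_left _ h₂,
    Finset.mem_union_left _ h₃, Finset.mem_union_left _ h₄, i₁, i₂, i₃, i₄, dj₁₂, dj₃₄, hu,
    hne, ?_⟩
  rw [union_sdiff hT h₁ h₂, union_sdiff hT' h₃ h₄, hrest]

end FlipStep

/-- Flips inside `R` do not touch the dimers of `E`, none of which lies in `R`. -/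
theorem FlipConnected.union_right {R : Finset Cell} {T T' E : Finset (Finset Cell)}
    (h : FlipConnected T T') (hT : ∀ d ∈ T, d ⊆ R) (hE : ∀ e ∈ E, ¬ e ⊆ R) :
    FlipConnected (T ∪ E) (T' ∪ E) := by
  have disjoint_of_subset {S : Finset (Finset Cell)} (hS : ∀ d ∈ S, d ⊆ R) : Disjoint S E :=
    Finset.disjoint_left.2 fun d hd hdE => hE d hdE (hS d hd)
  induction h using Relation.ReflTransGen.head_induction_on with
  | refl => exact Relation.ReflTransGen.refl
  | head step _ ih =>
    have hmid := step.subset_of_subset hT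
    exact Relation.ReflTransGen.head
      (step.union_right (disjoint_of_subset hT) (disjoint_of_subset hmid)) (ih hmid)

theorem flipConnected_lifts_to_embedding_general (D : Finset Sq)
    (T₀ T₁ : Finset (Finset Cell))
    (h₀ : IsTiling (duplexCells D) T₀)
    (hconn : FlipConnected T₀ T₁)
    (a b : Sq) :
    FlipConnected (embed2 D a b T₀) (embed2 D a b T₁) := by
  refine hconn.union_right (fun d hd => (h₀.1 d hd).2) ?_
  simp only [Finset.mem_image, Finset.mem_sdiff]
  rintro _ ⟨s, ⟨-, hs⟩, rfl⟩
  exact zDimerAt_not_subset_duplexCells hs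

/-- A flip connection between two tilings of a duplex region lifts to
their embeddings in any two-floored box containing the region. -/
theorem flipConnected_lifts_to_embedding (D : Finset Sq)
    (hsc : SimplyConnectedSpace (planeRegion D))
    (T₀ T₁ : Finset (Finset Cell))
    (h₀ : IsTiling (duplexCells D) T₀) (h₁ : IsTiling (duplexCells D) T₁)
    (hconn : FlipConnected T₀ T₁)
    (a b : Sq) (hbox : D ⊆ boxSq a b) :
    FlipConnected (embed2 D a b T₀) (embed2 D a b T₁) :=
  flipConnected_lifts_to_embedding_general D T₀ T₁ h₀ hconn a b
end
end
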